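/- arXiv:math/9912213 — 2 statements merged into one kernel-verified Lean document; each statement's English description precedes it below -/
import Mathlib

section
/- Suppose the face τ of ℚ_{≥0}A satisfies (ℚ(A∩τ)) ∩ ℤA = ℤ(A∩τ). If β - β' ∈ ℤA and both E_τ(β) and E_τ(β') are nonempty, then E_τ(β) = E_τ(β'). -/
open scoped BigOperators

/-- Cast an integer vector to a vector over `k`. -/
def castVec (k : Type*) [Field k] {d : ℕ} (v : Fin d → ℤ) : Fin d → k :=
  fun i => (v i : k)

/-- Cast an integer vector to a rational vector. -/
def castQVec {d : ℕ} (v : Fin d → ℤ) : Fin d → ℚ := fun i => (v i : ℚ)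

/-- The `j`-th column of `A` viewed over `ℚ`. -/
def aQ {d n : ℕ} (a : Fin n → Fin d → ℤ) (j : Fin n) : Fin d → ℚ := fun i => (a j i : ℚ)

/-- The monoid `ℕA` inside `k^d`. -/
def NAk (k : Type*) [Field k] {d n : ℕ} (a : Fin n → Fin d → ℤ) : AddSubmonoid (Fin d → k) :=
  AddSubmonoid.closure (Set.range fun j => castVec k (a j))

/-- The group `ℤ(A∩τ)` inside `k^d`. -/
def Zk (k : Type*) [Field k] {d n : ℕ} (a : Fin n → Fin d → ℤ) (τ : Set (Fin n)) :
    AddSubgroup (Fin d → k) :=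
  AddSubgroup.closure ((fun j => castVec k (a j)) '' τ)

/-- The `k`-linear span `k(A∩τ)` inside `k^d`. -/
def kspan (k : Type*) [Field k] {d n : ℕ} (a : Fin n → Fin d → ℤ) (τ : Set (Fin n)) :
    Submodule k (Fin d → k) :=
  Submodule.span k ((fun j => castVec k (a j)) '' τ)

/-- The set `E_τ(β) = {λ ∈ k(A∩τ)/ℤ(A∩τ) : β - λ ∈ ℕA + ℤ(A∩τ)}`,
realized inside the quotient of `k^d` by `ℤ(A∩τ)`. -/
def Eface (k : Type*) [Field k] {d n : ℕ} (a : Fin n → Fin d → ℤ) (τ : Set (Fin n))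
    (β : Fin d → k) : Set ((Fin d → k) ⧸ Zk k a τ) :=
  { x | ∃ lam : Fin d → k, lam ∈ kspan k a τ ∧ QuotientAddGroup.mk lam = x ∧
      ∃ m ∈ NAk k a, ∃ z ∈ Zk k a τ, β - lam = m + z }

/-- The monoid `ℕA` inside `ℤ^d`. -/
def NAint {d n : ℕ} (a : Fin n → Fin d → ℤ) : AddSubmonoid (Fin d → ℤ) :=
  AddSubmonoid.closure (Set.range a)

/-- The group `ℤ(A∩τ)` inside `ℤ^d`. -/
def Zint {d n : ℕ} (a : Fin n → Fin d → ℤ) (τ : Set (Fin n)) : AddSubgroup (Fin d → ℤ) :=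
  AddSubgroup.closure (a '' τ)

/-- A face of the cone `ℚ_{≥0}A`: the zero set on `A` of a supporting linear functional. -/
def IsFace {d n : ℕ} (a : Fin n → Fin d → ℤ) (τ : Set (Fin n)) : Prop :=
  ∃ F : (Fin d → ℚ) →ₗ[ℚ] ℚ, (∀ j, 0 ≤ F (aQ a j)) ∧ τ = {j | F (aQ a j) = 0}

/-- Integer dot product. -/
def dotZ {d : ℕ} (c v : Fin d → ℤ) : ℤ := ∑ i, c i * v i

/-- The `k`-linear extension of the linear form with integral coefficient vector `c`. -/
def dotK (k : Type*) [Field k] {d : ℕ} (c : Fin d → ℤ) (β : Fin d → k) : k :=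
  ∑ i, (c i : k) * β i

/-- `c` is the coefficient vector of the primitive integral support function of the facet `σ`:
nonnegative on the columns, vanishing exactly on the columns in `σ`, and with value group `ℤ`
on `ℤA`. -/
def IsPrimSupp {d n : ℕ} (a : Fin n → Fin d → ℤ) (σ : Set (Fin n)) (c : Fin d → ℤ) : Prop :=
  (∀ j, 0 ≤ dotZ c (a j)) ∧ (∀ j, dotZ c (a j) = 0 ↔ j ∈ σ) ∧
  (∃ u : Fin n → ℤ, ∑ j, u j * dotZ c (a j) = 1)

/-- A facet: a face of dimension `d-1`. -/
def IsFacet {d n : ℕ} (a : Fin n → Fin d → ℤ) (σ : Set (Fin n)) : Prop :=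
  IsFace a σ ∧ Module.finrank ℚ (Submodule.span ℚ (aQ a '' σ)) = d - 1

/-- All columns of `A` lie on a common affine hyperplane off the origin. -/
def OnHyperplane {d n : ℕ} (a : Fin n → Fin d → ℤ) : Prop :=
  ∃ h : Fin d → ℚ, ∀ j, ∑ i, h i * (a j i : ℚ) = 1

/-- The matrix `A` has rank `d`. -/
def FullRank {d n : ℕ} (a : Fin n → Fin d → ℤ) : Prop :=
  Submodule.span ℚ (Set.range (aQ a)) = ⊤

/-- The rational cone `ℚ_{≥0}A`. -/
def coneQ {d n : ℕ} (a : Fin n → Fin d → ℤ) : Set (Fin d → ℚ) :=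
  {x | ∃ c : Fin n → ℚ, (∀ j, 0 ≤ c j) ∧ x = ∑ j, c j • aQ a j}

/-- Normality of the semigroup: `ℕA = ℤA ∩ ℚ_{≥0}A`. -/
def IsNormal {d n : ℕ} (a : Fin n → Fin d → ℤ) : Prop :=
  ∀ v : Fin d → ℤ, v ∈ Zint a Set.univ → castQVec v ∈ coneQ a → v ∈ NAint a

/-- Coordinatewise cast `ℤ^d → ℚ^d` as an additive monoid homomorphism. -/
def castQhom (d : ℕ) : (Fin d → ℤ) →+ (Fin d → ℚ) where
  toFun v := fun i => (v i : ℚ)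
  map_zero' := by funext i; simp
  map_add' u v := by funext i; simp

/-- The lattice `(ℚ(A∩τ)) ∩ ℤA` inside `ℤ^d`. -/
def latticeQτ {d n : ℕ} (a : Fin n → Fin d → ℤ) (τ : Set (Fin n)) :
    AddSubgroup (Fin d → ℤ) :=
  Zint a Set.univ ⊓
    AddSubgroup.comap (castQhom d) (Submodule.span ℚ (aQ a '' τ)).toAddSubgroup

/-!
Two points `λ, λ'` of `E_τ(γ)` differ by an element of `ℤA ∩ k(A∩τ)`. Being integral, it lies in
`ℚ(A∩τ) ∩ ℤA = ℤ(A∩τ)`, so `E_τ(γ)` has at most one point. Writing `β - β' = χ - χ'` with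
`χ, χ' ∈ ℕA`, both `E_τ(β)` and `E_τ(β')` lie in `E_τ(β + χ') = E_τ(β' + χ)`; being nonempty,
they coincide.
-/

theorem Submodule.mem_span_of_algebraMap_comp_mem_span {K L ι : Type*} [Field K] [Field L]
    [Algebra K L] [Fintype ι] {s : Set (ι → K)} {v : ι → K}
    (hv : algebraMap K L ∘ v ∈ Submodule.span L ((algebraMap K L ∘ ·) '' s)) :
    v ∈ Submodule.span K s := by
  classical
  by_contra hvs
  obtain ⟨f, hfv, hsf⟩ := Submodule.exists_le_ker_of_notMem hvs
  -- `f` has coefficients in `K`, so it extends to a functional on `ι → L`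
  let g : (ι → L) →ₗ[L] L :=
    Fintype.linearCombination L fun i => algebraMap K L (f fun j => if i = j then 1 else 0)
  have hg : ∀ w : ι → K, g (algebraMap K L ∘ w) = algebraMap K L (f w) := fun w => by
    simp [g, Fintype.linearCombination_apply, LinearMap.pi_apply_eq_sum_univ f w, map_sum]
  have hgs : Submodule.span L ((algebraMap K L ∘ ·) '' s) ≤ LinearMap.ker g := by
    rw [Submodule.span_le]
    rintro _ ⟨w, hw, rfl⟩
    simp [hg, LinearMap.mem_ker.1 (hsf (Submodule.subset_span hw))]
  exact hfv (by simpa [hg] using hgs hv)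

theorem AddSubgroup.exists_sub_of_mem_closure {G : Type*} [AddCommGroup G] {s : Set G} {x : G}
    (hx : x ∈ AddSubgroup.closure s) :
    ∃ m ∈ AddSubmonoid.closure s, ∃ m' ∈ AddSubmonoid.closure s, x = m - m' := by
  induction hx using AddSubgroup.closure_induction with
  | mem y hy => exact ⟨y, AddSubmonoid.subset_closure hy, 0, zero_mem _, (sub_zero y).symm⟩
  | zero => exact ⟨0, zero_mem _, 0, zero_mem _, (sub_zero 0).symm⟩
  | add y z _ _ hy hz =>
    obtain ⟨m₁, hm₁, m₁', hm₁', rfl⟩ := hy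
    obtain ⟨m₂, hm₂, m₂', hm₂', rfl⟩ := hz
    exact ⟨m₁ + m₂, add_mem hm₁ hm₂, m₁' + m₂', add_mem hm₁' hm₂', by abel⟩
  | neg y _ hy =>
    obtain ⟨m, hm, m', hm', rfl⟩ := hy
    exact ⟨m', hm', m, hm, neg_sub m m'⟩

theorem Set.eq_of_nonempty_of_subset_subsingleton {α : Type*} {s t u : Set α}
    (hu : u.Subsingleton) (hsu : s ⊆ u) (htu : t ⊆ u) (hs : s.Nonempty) (ht : t.Nonempty) :
    s = t := by
  obtain ⟨x, hx⟩ := hs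
  obtain ⟨y, hy⟩ := ht
  rw [(hu.anti hsu).eq_singleton_of_mem hx, (hu.anti htu).eq_singleton_of_mem hy,
    hu (hsu hx) (htu hy)]

section Eface

variable {k : Type*} [Field k] {d n : ℕ} {a : Fin n → Fin d → ℤ} {τ : Set (Fin n)}

variable (k a) in
theorem Zk_eq_map (S : Set (Fin n)) :
    Zk k a S = (Zint a S).map ((Int.castAddHom k).compLeft (Fin d)) := by
  rw [Zk, Zint, AddMonoidHom.map_closure, Set.image_image]
  rfl

theorem Zk_mono_univ : Zk k a τ ≤ Zk k a Set.univ :=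
  AddSubgroup.closure_mono (Set.image_mono (Set.subset_univ τ))

theorem NAk_le_Zk_univ : NAk k a ≤ (Zk k a Set.univ).toAddSubmonoid := by
  rw [NAk, Zk, Set.image_univ]
  exact AddSubmonoid.closure_le.2 AddSubgroup.subset_closure

theorem exists_NAk_sub_eq_of_mem_Zk_univ {x : Fin d → k} (hx : x ∈ Zk k a Set.univ) :
    ∃ m ∈ NAk k a, ∃ m' ∈ NAk k a, x = m - m' := by
  rw [Zk, Set.image_univ] at hx
  exact AddSubgroup.exists_sub_of_mem_closure hx

theorem castQVec_mem_span_of_castVec_mem_kspan [CharZero k] {v : Fin d → ℤ}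
    (hv : castVec k v ∈ kspan k a τ) : castQVec v ∈ Submodule.span ℚ (aQ a '' τ) := by
  have hcast : ∀ u : Fin d → ℤ, algebraMap ℚ k ∘ castQVec u = castVec k u := fun u => by
    funext i
    simp [castQVec, castVec]
  apply Submodule.mem_span_of_algebraMap_comp_mem_span (L := k)
  have hcols : (fun j => algebraMap ℚ k ∘ aQ a j) = fun j => castVec k (a j) :=
    funext fun j => hcast (a j)
  rwa [hcast, Set.image_image, hcols]

theorem mem_Zk_of_mem_Zk_univ_of_mem_kspan [CharZero k]
    (hidx : ∀ v : Fin d → ℤ, v ∈ Zint a Set.univ →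
      castQVec v ∈ Submodule.span ℚ (aQ a '' τ) → v ∈ Zint a τ)
    {x : Fin d → k} (hx : x ∈ Zk k a Set.univ) (hxτ : x ∈ kspan k a τ) : x ∈ Zk k a τ := by
  rw [Zk_eq_map] at hx ⊢
  obtain ⟨v, hv, rfl⟩ := hx
  exact ⟨v, hidx v hv (castQVec_mem_span_of_castVec_mem_kspan hxτ), rfl⟩

theorem Eface_subsingleton [CharZero k]
    (hidx : ∀ v : Fin d → ℤ, v ∈ Zint a Set.univ →
      castQVec v ∈ Submodule.span ℚ (aQ a '' τ) → v ∈ Zint a τ)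
    (γ : Fin d → k) : (Eface k a τ γ).Subsingleton := by
  rintro _ ⟨l, hl, rfl, m, hm, z, hz, h⟩ _ ⟨l', hl', rfl, m', hm', z', hz', h'⟩
  have hdiff : l - l' = m' + z' - (m + z) := by rw [← h, ← h']; abel
  have hZ : l - l' ∈ Zk k a Set.univ := by
    rw [hdiff]
    exact sub_mem (add_mem (NAk_le_Zk_univ hm') (Zk_mono_univ hz'))
      (add_mem (NAk_le_Zk_univ hm) (Zk_mono_univ hz))
  exact (QuotientAddGroup.eq_iff_sub_mem).2
    (mem_Zk_of_mem_Zk_univ_of_mem_kspan hidx hZ (sub_mem hl hl'))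

theorem Eface_subset_add {γ m : Fin d → k} (hm : m ∈ NAk k a) :
    Eface k a τ γ ⊆ Eface k a τ (γ + m) := by
  rintro _ ⟨l, hl, rfl, m₀, hm₀, z, hz, h⟩
  refine ⟨l, hl, rfl, m₀ + m, add_mem hm₀ hm, z, hz, ?_⟩
  rw [add_sub_right_comm, h]
  abel

end Eface

theorem stmt7_general {d n : ℕ} (a : Fin n → Fin d → ℤ) (k : Type*) [Field k] [CharZero k]
    (τ : Set (Fin n))
    (hidx : ∀ v : Fin d → ℤ, v ∈ Zint a Set.univ →
      castQVec v ∈ Submodule.span ℚ (aQ a '' τ) → v ∈ Zint a τ)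
    (β β' : Fin d → k) (hββ' : β - β' ∈ Zk k a Set.univ)
    (h1 : (Eface k a τ β).Nonempty) (h2 : (Eface k a τ β').Nonempty) :
    Eface k a τ β = Eface k a τ β' := by
  obtain ⟨m, hm, m', hm', hdiff⟩ := exists_NAk_sub_eq_of_mem_Zk_univ hββ'
  have hsum : β' + m = β + m' := by
    rw [sub_eq_sub_iff_add_eq_add] at hdiff
    rw [add_comm, ← hdiff]
  exact Set.eq_of_nonempty_of_subset_subsingleton (Eface_subsingleton hidx (β + m'))
    (Eface_subset_add hm') (hsum ▸ Eface_subset_add hm) h1 h2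

/-- If the face `τ` satisfies `(ℚ(A∩τ)) ∩ ℤA = ℤ(A∩τ)`, `β - β' ∈ ℤA`, and
both `E_τ(β)` and `E_τ(β')` are nonempty, then `E_τ(β) = E_τ(β')`. -/
theorem stmt7 {d n : ℕ} (a : Fin n → Fin d → ℤ) (k : Type*) [Field k] [CharZero k]
    (τ : Set (Fin n)) (hτ : IsFace a τ)
    (hidx : ∀ v : Fin d → ℤ, v ∈ Zint a Set.univ →
      castQVec v ∈ Submodule.span ℚ (aQ a '' τ) → v ∈ Zint a τ)
    (β β' : Fin d → k) (hββ' : β - β' ∈ Zk k a Set.univ)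
    (h1 : (Eface k a τ β).Nonempty) (h2 : (Eface k a τ β').Nonempty) :
    Eface k a τ β = Eface k a τ β' :=
  stmt7_general a k τ hidx β β' hββ' h1 h2
end

section
/- Let M be a monomial ideal in k[∂_1,...,∂_n] of the form M_χ = ⟨∂^u : Au ∈ χ + ℕA⟩ for some χ ∈ ℤA, where the columns of A lie on a common hyperplane off the origin. If (u, τ) is a standard pair of M_χ, then the ℚ_{≥0}-cone generated by {a_j : j ∈ τ} is a proper face of ℚ_{≥0}A, and moreover τ = {i : a_i ∈ ℚ_{≥0}{a_j : j ∈ τ}}. -/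
open scoped BigOperators

/-- `∂^w ∈ M_χ`, i.e. `Aw ∈ χ + ℕA`. -/
def MemM {d n : ℕ} (a : Fin n → Fin d → ℤ) (χ : Fin d → ℤ) (w : Fin n → ℕ) : Prop :=
  ∃ m ∈ NAint a, (∑ j, (w j : ℤ) • a j) = χ + m

/-- `(u, τ)` is a standard pair of the monomial ideal `M_χ`. -/
def IsStdPair {d n : ℕ} (a : Fin n → Fin d → ℤ) (χ : Fin d → ℤ) (u : Fin n → ℕ)
    (τ : Set (Fin n)) : Prop :=
  (∀ j ∈ τ, u j = 0) ∧
  (¬∃ v : Fin n → ℕ, (∀ j, j ∉ τ → v j = 0) ∧ MemM a χ (u + v)) ∧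
  (∀ j, j ∉ τ → ∃ v : Fin n → ℕ, (∀ j', j' ∉ τ ∪ {j} → v j' = 0) ∧ MemM a χ (u + v))

/-- The cone `ℚ_{≥0}{a_j : j ∈ τ}`. -/
def coneOf {d n : ℕ} (a : Fin n → Fin d → ℤ) (τ : Set (Fin n)) : Set (Fin d → ℚ) :=
  {x | ∃ c : Fin n → ℚ, (∀ j, 0 ≤ c j) ∧ (∀ j, j ∉ τ → c j = 0) ∧ x = ∑ j, c j • aQ a j}

/-!
For `j₀ ∉ τ`, Farkas' lemma gives either a functional that is `≥ 0` on `A`, vanishes on `A ∩ τ`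
and is positive at `a_{j₀}`, or a nonnegative combination of `A` with positive `a_{j₀}`-coefficient
equal to `γ = ∑_{i ∈ τ} a_i`. In the second case clearing denominators gives `A m = L γ` with
`m ∈ ℕⁿ`, `m_{j₀} > 0`. The standard pair condition supplies `∂^(u+v) ∈ M_χ` with `v` supported
on `τ ∪ {j₀}`; after scaling, its `a_{j₀}`-part can be traded for a multiple of `γ`, giving an
element `∂^(u+v') ∈ M_χ` with `v'` supported on `τ`, which is impossible. Summing the functionals
over `j₀ ∉ τ` exhibits `τ` as a face. It is proper: `χ ∈ ℤA` makes `M_χ ≠ 0`, which rules out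
`τ = {1, …, n}` by condition (ii).
-/

section Farkas

variable {𝕜 V ι : Type*} [Field 𝕜] [LinearOrder 𝕜] [IsStrictOrderedRing 𝕜]
  [AddCommGroup V] [Module 𝕜 V]

theorem exists_dual_nonneg_and_neg_of_forall_ne_sum (s : Finset ι) (w : ι → V) (x : V)
    (hx : ∀ c : ι → 𝕜, (∀ k ∈ s, 0 ≤ c k) → x ≠ ∑ k ∈ s, c k • w k) :
    ∃ f : Module.Dual 𝕜 V, (∀ k ∈ s, 0 ≤ f (w k)) ∧ f x < 0 := by
  classical
  induction s using Finset.induction_on generalizing w x with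
  | empty =>
    have hx0 : x ≠ 0 := by simpa using hx 0
    obtain ⟨f, hf⟩ := Module.Projective.exists_dual_ne_zero 𝕜 hx0
    rcases hf.lt_or_gt with hneg | hpos
    · exact ⟨f, by simp, hneg⟩
    · exact ⟨-f, by simp, by simpa using hpos⟩
  | insert l s hl ih =>
    have hsum_update : ∀ (c : ι → 𝕜) (μ : 𝕜), ∑ k ∈ insert l s, Function.update c l μ k • w k
        = μ • w l + ∑ k ∈ s, c k • w k := fun c μ => by
      rw [Finset.sum_insert hl, Function.update_self]
      exact congrArg _ (Finset.sum_congr rfl fun k hk => by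
        rw [Function.update_of_ne (ne_of_mem_of_not_mem hk hl)])
    have hnonneg_update : ∀ (c : ι → 𝕜) (μ : 𝕜), 0 ≤ μ → (∀ k ∈ s, 0 ≤ c k) →
        ∀ k ∈ insert l s, 0 ≤ Function.update c l μ k := fun c μ hμ hc k hk => by
      rcases eq_or_ne k l with rfl | hkl
      · simpa using hμ
      · simpa [hkl] using hc k ((Finset.mem_insert.1 hk).resolve_left hkl)
    obtain ⟨f, hf, hfx⟩ := ih w x fun c hc hxc =>
      hx _ (hnonneg_update c 0 le_rfl hc) (by rw [hsum_update, zero_smul, zero_add, hxc])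
    by_cases hfl : 0 ≤ f (w l)
    · exact ⟨f, Finset.forall_mem_insert _ _ _ |>.2 ⟨hfl, hf⟩, hfx⟩
    replace hfl := not_le.1 hfl
    -- the projection along `w l` onto `ker f` reduces to the cone over `s`
    set π : V →ₗ[𝕜] V := LinearMap.id - (f (w l))⁻¹ • f.smulRight (w l) with hπ
    have hπ_apply : ∀ y, π y = y - ((f (w l))⁻¹ * f y) • w l := fun y => by
      simp [hπ, mul_smul]
    obtain ⟨g, hg, hgx⟩ := ih (fun k => π (w k)) (π x) fun c hc hxc => by
      set y := x - ∑ k ∈ s, c k • w k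
      have hker : y = ((f (w l))⁻¹ * f y) • w l := by
        have := hπ_apply y
        rw [map_sub, map_sum, hxc] at this
        simp only [map_smul, sub_self] at this
        exact sub_eq_zero.1 this.symm
      have hfy : f y < 0 := by
        have : 0 ≤ ∑ k ∈ s, c k * f (w k) :=
          Finset.sum_nonneg fun k hk => mul_nonneg (hc k hk) (hf k hk)
        simp only [y, map_sub, map_sum, map_smul, smul_eq_mul]
        linarith
      refine hx _ (hnonneg_update c _ (mul_nonneg_of_nonpos_of_nonpos
        (inv_lt_zero.2 hfl).le hfy.le) hc) ?_
      rw [hsum_update, ← hker, sub_add_cancel]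
    refine ⟨g ∘ₗ π, Finset.forall_mem_insert _ _ _ |>.2 ⟨?_, hg⟩, hgx⟩
    simp [hπ_apply, hfl.ne]

theorem exists_dual_pos_or_exists_sum_eq_sum_indicator [Fintype ι] (w : ι → V) (τ : Set ι)
    (j₀ : ι) :
    (∃ f : Module.Dual 𝕜 V, (∀ j, 0 ≤ f (w j)) ∧ (∀ i ∈ τ, f (w i) = 0) ∧ 0 < f (w j₀)) ∨
    ∃ c : ι → 𝕜, (∀ j, 0 ≤ c j) ∧ 0 < c j₀ ∧ ∑ j, c j • w j = ∑ j, τ.indicator w j := by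
  classical
  set W : ι ⊕ ι → V := Sum.elim w fun i => -τ.indicator w i
  by_cases h : ∀ c : ι ⊕ ι → 𝕜, (∀ k ∈ Finset.univ, 0 ≤ c k) → -w j₀ ≠ ∑ k, c k • W k
  · obtain ⟨f, hf, hfj₀⟩ := exists_dual_nonneg_and_neg_of_forall_ne_sum _ W _ h
    refine Or.inl ⟨f, fun j => hf (.inl j) (Finset.mem_univ _), fun i hi => ?_, by simpa using hfj₀⟩
    have := hf (.inr i) (Finset.mem_univ _)
    simp only [W, Sum.elim_inr, Set.indicator_of_mem hi, map_neg] at this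
    exact le_antisymm (neg_nonneg.1 this) (hf (.inl i) (Finset.mem_univ _))
  push Not at h
  obtain ⟨c, hc, hcW⟩ := h
  simp only [W, Fintype.sum_sum_type, Sum.elim_inl, Sum.elim_inr, smul_neg,
    Finset.sum_neg_distrib] at hcW
  set b := fun j => c (.inl j)
  set e := fun i => c (.inr i)
  have hb : ∀ j, 0 ≤ b j := fun j => hc _ (Finset.mem_univ _)
  have he : ∀ i, 0 ≤ e i := fun i => hc _ (Finset.mem_univ _)
  -- raise the coefficients on `τ` by `N ≥ e` to make them nonnegative
  set N : 𝕜 := 1 + ∑ i, e i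
  have hN : 0 < N := by have := Finset.sum_nonneg fun i (_ : i ∈ Finset.univ) => he i; positivity
  have heN : ∀ i, e i ≤ N := fun i => by
    have := Finset.single_le_sum (fun i _ => he i) (Finset.mem_univ i); simp only [N]; linarith
  have hind : ∀ j, τ.indicator (fun i => N - e i) j • w j =
      N • τ.indicator w j - e j • τ.indicator w j := fun j => by
    by_cases hj : j ∈ τ <;> simp [hj, sub_smul]
  refine Or.inr ⟨fun j => N⁻¹ * (b j + (Pi.single j₀ 1 : ι → 𝕜) j +
    τ.indicator (fun i => N - e i) j), fun j => ?_, ?_, ?_⟩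
  · have : 0 ≤ τ.indicator (fun i => N - e i) j :=
      Set.indicator_nonneg (fun i _ => sub_nonneg.2 (heN i)) j
    have : (0 : 𝕜) ≤ (Pi.single j₀ 1 : ι → 𝕜) j := by
      rcases eq_or_ne j j₀ with rfl | hj <;> simp [*]
    have := hb j
    positivity
  · have : 0 ≤ τ.indicator (fun i => N - e i) j₀ :=
      Set.indicator_nonneg (fun i _ => sub_nonneg.2 (heN i)) j₀
    have := hb j₀
    simp only [Pi.single_eq_same]
    positivity
  · simp only [mul_smul, ← Finset.smul_sum, add_smul, Finset.sum_add_distrib, hind,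
      Finset.sum_sub_distrib, Pi.single_apply, ite_smul, one_smul, zero_smul,
      Finset.sum_ite_eq', Finset.mem_univ, if_true]
    have : ∑ j, b j • w j + w j₀ = ∑ j, e j • τ.indicator w j := by
      linear_combination (norm := module) -hcW
    rw [this, add_sub_cancel, smul_smul, inv_mul_cancel₀ hN.ne', one_smul]

theorem exists_dual_nonneg_and_eq_setOf_eq_zero [Fintype ι] {w : ι → V} {τ : Set ι}
    (h : ∀ j ∉ τ, ∃ f : Module.Dual 𝕜 V,
      (∀ k, 0 ≤ f (w k)) ∧ (∀ i ∈ τ, f (w i) = 0) ∧ 0 < f (w j)) :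
    ∃ F : Module.Dual 𝕜 V, (∀ k, 0 ≤ F (w k)) ∧ τ = {j | F (w j) = 0} := by
  classical
  choose! f hf hfτ hfj using h
  have hF : ∀ k, (∑ j ∈ Finset.univ.filter (· ∉ τ), f j) (w k) =
      ∑ j ∈ Finset.univ.filter (· ∉ τ), f j (w k) := fun k => LinearMap.sum_apply _ _ _
  refine ⟨∑ j ∈ Finset.univ.filter (· ∉ τ), f j, fun k => ?_, ?_⟩
  · rw [hF]
    exact Finset.sum_nonneg fun j hj => hf j (Finset.mem_filter.1 hj).2 k
  ext k
  rw [Set.mem_ofPred_eq, hF]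
  refine ⟨fun hk => Finset.sum_eq_zero fun j hj => hfτ j (Finset.mem_filter.1 hj).2 k hk,
    fun hk => by_contra fun hkτ => ?_⟩
  refine (Finset.sum_pos' (fun j hj => hf j (Finset.mem_filter.1 hj).2 k) ⟨k, ?_, hfj k hkτ⟩).ne' hk
  simpa using hkτ

end Farkas

theorem exists_pos_nat_mul_eq_natCast {ι : Type*} [Fintype ι] (q : ι → ℚ) (hq : ∀ k, 0 ≤ q k) :
    ∃ L : ℕ, 0 < L ∧ ∃ m : ι → ℕ, ∀ k, (m k : ℚ) = L * q k := by
  refine ⟨∏ k, (q k).den, Finset.prod_pos fun k _ => (q k).den_pos,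
    fun k => (∏ k, (q k).den) / (q k).den * (q k).num.toNat, fun k => ?_⟩
  have hdvd : (q k).den ∣ ∏ k, (q k).den := Finset.dvd_prod_of_mem _ (Finset.mem_univ k)
  have hnum : ((q k).num.toNat : ℚ) = (q k).num := by
    exact_mod_cast Int.toNat_of_nonneg (Rat.num_nonneg.2 (hq k))
  rw [Nat.cast_mul, Nat.cast_div hdvd (by exact_mod_cast (q k).den_nz), hnum,
    ← Rat.mul_den_eq_num]
  field_simp

section StandardPair

variable {d n : ℕ} {a : Fin n → Fin d → ℤ} {χ : Fin d → ℤ}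

theorem memM_iff {w : Fin n → ℕ} :
    MemM a χ w ↔ ∃ m ∈ NAint a, Fintype.linearCombination ℕ a w = χ + m := by
  simp only [MemM, Fintype.linearCombination_apply, natCast_zsmul]

theorem linearCombination_mem_NAint (w : Fin n → ℕ) : Fintype.linearCombination ℕ a w ∈ NAint a :=
  AddSubmonoid.mem_closure_range_iff_of_fintype.2 ⟨w, rfl⟩

theorem MemM.mono {x y : Fin n → ℕ} (hx : MemM a χ x) (hxy : x ≤ y) : MemM a χ y := by
  obtain ⟨m, hm, hxm⟩ := memM_iff.1 hx
  refine memM_iff.2 ⟨m + Fintype.linearCombination ℕ a (y - x),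
    add_mem hm (linearCombination_mem_NAint _), ?_⟩
  conv_lhs => rw [← add_tsub_cancel_of_le hxy]
  rw [map_add, hxm, add_assoc]

theorem exists_memM (hχ : χ ∈ Zint a Set.univ) : ∃ x, MemM a χ x := by
  suffices ∃ x y, χ = Fintype.linearCombination ℕ a x - Fintype.linearCombination ℕ a y by
    obtain ⟨x, y, rfl⟩ := this
    exact ⟨x, memM_iff.2 ⟨_, linearCombination_mem_NAint y, (sub_add_cancel _ _).symm⟩⟩
  rw [Zint, Set.image_univ] at hχ
  classical
  induction hχ using AddSubgroup.closure_induction with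
  | mem _ hz =>
    obtain ⟨j, rfl⟩ := hz
    exact ⟨Pi.single j 1, 0, by simp⟩
  | zero => exact ⟨0, 0, by simp⟩
  | add _ _ _ _ ih₁ ih₂ =>
    obtain ⟨x₁, y₁, rfl⟩ := ih₁
    obtain ⟨x₂, y₂, rfl⟩ := ih₂
    exact ⟨x₁ + x₂, y₁ + y₂, by simp only [map_add]; abel⟩
  | neg _ _ ih =>
    obtain ⟨x, y, rfl⟩ := ih
    exact ⟨y, x, by abel⟩

theorem castQhom_linearCombination (w : Fin n → ℕ) :
    castQhom d (Fintype.linearCombination ℕ a w) = ∑ j, (w j : ℚ) • aQ a j := by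
  simp only [Fintype.linearCombination_apply, map_sum, map_nsmul, Nat.cast_smul_eq_nsmul]
  rfl

theorem castQhom_injective : Function.Injective (castQhom d) :=
  fun _ _ h => funext fun i => Int.cast_injective (congrFun h i)

theorem exists_linearCombination_eq_smul_indicator {τ : Set (Fin n)} {j₀ : Fin n}
    {c : Fin n → ℚ} (hc : ∀ j, 0 ≤ c j) (hcj₀ : 0 < c j₀)
    (hsum : ∑ j, c j • aQ a j = ∑ j, τ.indicator (aQ a) j) :
    ∃ m : Fin n → ℕ, ∃ L : ℕ, 0 < m j₀ ∧
      Fintype.linearCombination ℕ a m = L • Fintype.linearCombination ℕ a (τ.indicator 1) := by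
  obtain ⟨L, hL, m, hm⟩ := exists_pos_nat_mul_eq_natCast c hc
  refine ⟨m, L, by exact_mod_cast (hm j₀ ▸ mul_pos (Nat.cast_pos.2 hL) hcj₀), castQhom_injective ?_⟩
  have hind : ∀ j, ((τ.indicator 1 j : ℕ) : ℚ) • aQ a j = τ.indicator (aQ a) j := fun j => by
    by_cases hj : j ∈ τ <;> simp [hj]
  rw [map_nsmul, castQhom_linearCombination, castQhom_linearCombination]
  simp only [hm, hind, mul_smul, ← Finset.smul_sum, hsum, Nat.cast_smul_eq_nsmul]

namespace IsStdPair

variable {u : Fin n → ℕ} {τ : Set (Fin n)}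

theorem ne_univ (hsp : IsStdPair a χ u τ) (hχ : χ ∈ Zint a Set.univ) : τ ≠ Set.univ := by
  rintro rfl
  obtain ⟨x, hx⟩ := exists_memM hχ
  exact hsp.2.1 ⟨x, by simp, hx.mono le_add_self⟩

theorem linearCombination_ne_smul_indicator (hsp : IsStdPair a χ u τ) {j₀ : Fin n}
    (hj₀ : j₀ ∉ τ) {m : Fin n → ℕ} (hm : 0 < m j₀) (L : ℕ) :
    Fintype.linearCombination ℕ a m ≠ L • Fintype.linearCombination ℕ a (τ.indicator 1) := by
  intro hmL
  obtain ⟨-, hnot, hcover⟩ := hsp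
  obtain ⟨v, hv, hmem⟩ := hcover j₀ hj₀
  refine hnot ⟨τ.indicator (m j₀ • v) + (v j₀ * L) • τ.indicator 1,
    fun j hj => by simp [hj], ?_⟩
  have hcomb : Fintype.linearCombination ℕ a (u + (τ.indicator (m j₀ • v) +
      (v j₀ * L) • τ.indicator 1)) =
      Fintype.linearCombination ℕ a (u + τ.indicator (m j₀ • v) + v j₀ • m) := by
    simp only [map_add, map_nsmul, mul_smul, ← hmL, add_assoc]
  have hle : u + v ≤ u + τ.indicator (m j₀ • v) + v j₀ • m := fun k => by
    simp only [Pi.add_apply, Pi.smul_apply, smul_eq_mul, add_assoc]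
    refine Nat.add_le_add_left ?_ _
    by_cases hk : k ∈ τ
    · rw [Set.indicator_of_mem hk, Pi.smul_apply, smul_eq_mul]
      exact le_add_right (Nat.le_mul_of_pos_left _ hm)
    rw [Set.indicator_of_notMem hk, zero_add]
    rcases eq_or_ne k j₀ with rfl | hkj₀
    · exact Nat.le_mul_of_pos_right _ hm
    · simp [hv k (by simp [hk, hkj₀])]
  obtain ⟨m', hm', hm'eq⟩ := memM_iff.1 (hmem.mono hle)
  exact memM_iff.2 ⟨m', hm', hcomb.trans hm'eq⟩

theorem isFace (hsp : IsStdPair a χ u τ) : IsFace a τ := by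
  refine exists_dual_nonneg_and_eq_setOf_eq_zero (𝕜 := ℚ) fun j₀ hj₀ => ?_
  rcases exists_dual_pos_or_exists_sum_eq_sum_indicator (𝕜 := ℚ) (aQ a) τ j₀ with
    hf | ⟨c, hc, hcj₀, hsum⟩
  · exact hf
  obtain ⟨m, L, hm, hmL⟩ := exists_linearCombination_eq_smul_indicator hc hcj₀ hsum
  exact absurd hmL (hsp.linearCombination_ne_smul_indicator hj₀ hm L)

end IsStdPair

theorem aQ_mem_coneOf {S : Set (Fin n)} {i : Fin n} (hi : i ∈ S) : aQ a i ∈ coneOf a S := by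
  classical
  refine ⟨Pi.single i 1, fun j => ?_, fun j hj => ?_, by simp⟩
  · rcases eq_or_ne j i with rfl | hji <;> simp [*]
  · simp [ne_of_mem_of_not_mem hi hj |>.symm]

theorem coneOf_eq_inter_setOf_eq_zero {τ : Set (Fin n)} {F : (Fin d → ℚ) →ₗ[ℚ] ℚ}
    (hF : ∀ j, 0 ≤ F (aQ a j)) (hτ : τ = {j | F (aQ a j) = 0}) :
    coneOf a τ = coneOf a Set.univ ∩ {x | F x = 0} := by
  have hFsum : ∀ c : Fin n → ℚ, F (∑ j, c j • aQ a j) = ∑ j, c j * F (aQ a j) := fun c => by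
    simp only [map_sum, map_smul, smul_eq_mul]
  ext x
  constructor
  · rintro ⟨c, hc, hcτ, rfl⟩
    refine ⟨⟨c, hc, by simp, rfl⟩, ?_⟩
    rw [Set.mem_ofPred_eq, hFsum]
    refine Finset.sum_eq_zero fun j _ => ?_
    by_cases hj : j ∈ τ
    · rw [hτ] at hj
      rw [hj, mul_zero]
    · rw [hcτ j hj, zero_mul]
  · rintro ⟨⟨c, hc, -, rfl⟩, hFx⟩
    rw [Set.mem_ofPred_eq, hFsum, Finset.sum_eq_zero_iff_of_nonneg
      fun j _ => mul_nonneg (hc j) (hF j)] at hFx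
    refine ⟨c, hc, fun j hj => ?_, rfl⟩
    rw [hτ] at hj
    exact (mul_eq_zero.1 (hFx j (Finset.mem_univ j))).resolve_right hj

end StandardPair

theorem stmt17_general {d n : ℕ} (a : Fin n → Fin d → ℤ)
    (χ : Fin d → ℤ) (hχ : χ ∈ Zint a Set.univ)
    (u : Fin n → ℕ) (τ : Set (Fin n)) (hsp : IsStdPair a χ u τ) :
    (∃ F : (Fin d → ℚ) →ₗ[ℚ] ℚ, (∀ j, 0 ≤ F (aQ a j)) ∧
      coneOf a τ = coneOf a Set.univ ∩ {x | F x = 0} ∧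
      coneOf a τ ≠ coneOf a Set.univ) ∧
    τ = {i | aQ a i ∈ coneOf a τ} := by
  obtain ⟨F, hF, hτ⟩ := hsp.isFace
  have hcone := coneOf_eq_inter_setOf_eq_zero hF hτ
  have hmem : ∀ i, aQ a i ∈ coneOf a τ ↔ i ∈ τ := fun i =>
    ⟨fun hi => hτ ▸ (hcone ▸ hi).2, aQ_mem_coneOf⟩
  obtain ⟨j₁, hj₁⟩ := (Set.ne_univ_iff_exists_notMem τ).1 (hsp.ne_univ hχ)
  refine ⟨⟨F, hF, hcone, fun h => hj₁ ((hmem j₁).1 (h ▸ aQ_mem_coneOf (Set.mem_univ j₁)))⟩, ?_⟩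
  ext i
  exact (hmem i).symm

/-- If `(u, τ)` is a standard pair of `M_χ`, then the cone generated by
`{a_j : j ∈ τ}` is a proper face of `ℚ_{≥0}A` and `τ = {i : a_i ∈ ℚ_{≥0}{a_j : j ∈ τ}}`. -/
theorem stmt17 {d n : ℕ} (a : Fin n → Fin d → ℤ)
    (hA : OnHyperplane a) (hrank : FullRank a)
    (χ : Fin d → ℤ) (hχ : χ ∈ Zint a Set.univ)
    (u : Fin n → ℕ) (τ : Set (Fin n)) (hsp : IsStdPair a χ u τ) :
    (∃ F : (Fin d → ℚ) →ₗ[ℚ] ℚ, (∀ j, 0 ≤ F (aQ a j)) ∧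
      coneOf a τ = coneOf a Set.univ ∩ {x | F x = 0} ∧
      coneOf a τ ≠ coneOf a Set.univ) ∧
    τ = {i | aQ a i ∈ coneOf a τ} :=
  stmt17_general a χ hχ u τ hsp
end
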